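/- arXiv:1802.00397 — 3 statements merged into one kernel-verified Lean document; each statement's English description precedes it below -/
import Mathlib

section
/- For every measurable set A ⊆ ℝ, the Lebesgue measure of the preimage T⁻¹(A) under the Boole map T(x) = x - 1/x equals the Lebesgue measure of A. -/
/-!
Off `0` the Boole map `T x = x - 1/x` is two-to-one: `T x = y` means `x² - y x - 1 = 0`, whose
roots `g₊ y = (y + √(y² + 4))/2 > 0` and `g₋ y = (y - √(y² + 4))/2 < 0` are inverse branches of `T`
onto `(0, ∞)` and `(-∞, 0)`. By the change of variables formula,
`m (T⁻¹ A) = m (g₊ A) + m (g₋ A) = ∫_A (|g₊'| + |g₋'|)`, and since `g₊ + g₋ = id` with both branches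
increasing, `|g₊'| + |g₋'| = 1`.
-/

open MeasureTheory Set Function

section InverseBranches

variable {T g g' g₁ g₂ g₁' g₂' : ℝ → ℝ} {A : Set ℝ}

lemma volume_image_eq_lintegral_abs_deriv (hA : MeasurableSet A)
    (hg : ∀ y, HasDerivAt g (g' y) y) (hinj : Injective g) :
    volume (g '' A) = ∫⁻ y in A, ENNReal.ofReal |g' y| := by
  simpa using lintegral_image_eq_lintegral_abs_deriv_mul hA
    (fun y _ => (hg y).hasDerivWithinAt) hinj.injOn 1

lemma image_eq_range_inter_preimage_of_leftInverse (h : LeftInverse T g) (A : Set ℝ) :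
    g '' A = range g ∩ T ⁻¹' A := by
  rw [← image_preimage_eq_range_inter, ← preimage_comp, h.comp_eq_id, preimage_id]

theorem volume_preimage_eq_lintegral_of_inverse_branches (hA : MeasurableSet A)
    (hT₁ : LeftInverse T g₁) (hT₂ : LeftInverse T g₂)
    (hg₁ : ∀ y, HasDerivAt g₁ (g₁' y) y) (hg₂ : ∀ y, HasDerivAt g₂ (g₂' y) y)
    (hdisj : Disjoint (range g₁) (range g₂)) (hcover : volume (range g₁ ∪ range g₂)ᶜ = 0) :
    volume (T ⁻¹' A) = ∫⁻ y in A, ENNReal.ofReal (|g₁' y| + |g₂' y|) := by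
  have hmeas₂ : MeasurableSet (g₂ '' A) :=
    ((Differentiable.continuous fun y => (hg₂ y).differentiableAt).measurableEmbedding
      hT₂.injective).measurableSet_image.2 hA
  have hmeas_deriv₁ : Measurable fun y => ENNReal.ofReal |g₁' y| := by
    rw [show g₁' = deriv g₁ from funext fun y => (hg₁ y).deriv.symm]
    exact (measurable_deriv g₁).abs.ennreal_ofReal
  calc volume (T ⁻¹' A) = volume (T ⁻¹' A ∩ (range g₁ ∪ range g₂)) :=
        (measure_inter_conull hcover).symm
    _ = volume (g₁ '' A ∪ g₂ '' A) := by
        rw [image_eq_range_inter_preimage_of_leftInverse hT₁,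
          image_eq_range_inter_preimage_of_leftInverse hT₂, inter_union_distrib_left,
          inter_comm, inter_comm (T ⁻¹' A)]
    _ = volume (g₁ '' A) + volume (g₂ '' A) :=
        measure_union (hdisj.mono (image_subset_range _ _) (image_subset_range _ _)) hmeas₂
    _ = ∫⁻ y in A, ENNReal.ofReal (|g₁' y| + |g₂' y|) := by
        rw [volume_image_eq_lintegral_abs_deriv hA hg₁ hT₁.injective,
          volume_image_eq_lintegral_abs_deriv hA hg₂ hT₂.injective,
          ← lintegral_add_left hmeas_deriv₁]
        simp only [ENNReal.ofReal_add (abs_nonneg _) (abs_nonneg _)]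

end InverseBranches

section BooleBranches

lemma abs_lt_sqrt_sq_add_four (y : ℝ) : |y| < √(y ^ 2 + 4) := by
  rw [← Real.sqrt_sq_eq_abs]
  exact Real.sqrt_lt_sqrt (sq_nonneg _) (by linarith)

/-- For `s = 1` and `s = -1`, the two inverse branches of the Boole map. -/
noncomputable def booleBranch (s y : ℝ) : ℝ := (y + s * √(y ^ 2 + 4)) / 2

noncomputable def booleBranchDeriv (s y : ℝ) : ℝ := (1 + s * (y / √(y ^ 2 + 4))) / 2

lemma booleBranch_one_pos (y : ℝ) : 0 < booleBranch 1 y := by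
  have := abs_lt.1 (abs_lt_sqrt_sq_add_four y)
  unfold booleBranch; linarith

lemma booleBranch_neg_one_neg (y : ℝ) : booleBranch (-1) y < 0 := by
  have := abs_lt.1 (abs_lt_sqrt_sq_add_four y)
  unfold booleBranch; linarith

lemma booleBranch_sq_sub_mul_self {s : ℝ} (hs : s ^ 2 = 1) (y : ℝ) :
    booleBranch s y ^ 2 - y * booleBranch s y = 1 := by
  have hsqrt := Real.sq_sqrt (by positivity : (0 : ℝ) ≤ y ^ 2 + 4)
  unfold booleBranch
  linear_combination (s ^ 2 * hsqrt + (y ^ 2 + 4) * hs) / 4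

lemma leftInverse_booleBranch {s : ℝ} (hs : s ^ 2 = 1) :
    LeftInverse (fun x : ℝ => x - 1 / x) (booleBranch s) := fun y => by
  have hroot := booleBranch_sq_sub_mul_self hs y
  have hne : booleBranch s y ≠ 0 := fun h => by simp [h] at hroot
  field_simp
  linear_combination hroot

lemma hasDerivAt_booleBranch (s y : ℝ) :
    HasDerivAt (booleBranch s) (booleBranchDeriv s y) y := by
  have hsqrt : HasDerivAt (fun y => √(y ^ 2 + 4)) (y / √(y ^ 2 + 4)) y := by
    convert ((hasDerivAt_pow 2 y).add_const 4).sqrt (by positivity) using 1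
    field_simp
    push_cast
    ring
  exact ((hasDerivAt_id y).add (hsqrt.const_mul s)).div_const 2

lemma booleBranchDeriv_pos {s : ℝ} (hs : |s| ≤ 1) (y : ℝ) : 0 < booleBranchDeriv s y := by
  have hsqrt := Real.sqrt_pos.2 (by positivity : (0 : ℝ) < y ^ 2 + 4)
  have hlt : |s * (y / √(y ^ 2 + 4))| < 1 := by
    rw [abs_mul, abs_div, abs_of_pos hsqrt]
    calc |s| * (|y| / √(y ^ 2 + 4)) ≤ 1 * (|y| / √(y ^ 2 + 4)) := by gcongr
      _ < 1 := by rw [one_mul, div_lt_one hsqrt]; exact abs_lt_sqrt_sq_add_four y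
  unfold booleBranchDeriv
  linarith [neg_abs_le (s * (y / √(y ^ 2 + 4)))]

lemma abs_booleBranchDeriv_one_add_abs_booleBranchDeriv_neg_one (y : ℝ) :
    |booleBranchDeriv 1 y| + |booleBranchDeriv (-1) y| = 1 := by
  rw [abs_of_pos (booleBranchDeriv_pos (by norm_num) y),
    abs_of_pos (booleBranchDeriv_pos (by norm_num) y), booleBranchDeriv, booleBranchDeriv]
  ring

lemma disjoint_range_booleBranch :
    Disjoint (range (booleBranch 1)) (range (booleBranch (-1))) :=
  Ioi_disjoint_Iio_same.mono (range_subset_iff.2 booleBranch_one_pos)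
    (range_subset_iff.2 booleBranch_neg_one_neg)

-- `x` is a root of `X² - (T x) X - 1`, so `2x - T x = ±√((T x)² + 4)`.
lemma mem_range_booleBranch {x : ℝ} (hx : x ≠ 0) :
    x ∈ range (booleBranch 1) ∪ range (booleBranch (-1)) := by
  set y := x - 1 / x with hy
  have hroot : (2 * x - y) ^ 2 = √(y ^ 2 + 4) ^ 2 := by
    rw [Real.sq_sqrt (by positivity), hy]
    field_simp
    ring
  rcases sq_eq_sq_iff_eq_or_eq_neg.1 hroot with h | h
  · exact Or.inl ⟨y, by unfold booleBranch; linarith⟩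
  · exact Or.inr ⟨y, by unfold booleBranch; linarith⟩

lemma volume_compl_range_booleBranch :
    volume (range (booleBranch 1) ∪ range (booleBranch (-1)))ᶜ = 0 :=
  measure_mono_null (fun _ hx => by_contra fun h => hx (mem_range_booleBranch h))
    (Real.volume_singleton (a := 0))

end BooleBranches

theorem boole_measure_preserving (A : Set ℝ) (hA : MeasurableSet A) :
    volume ((fun x : ℝ => x - 1 / x) ⁻¹' A) = volume A := by
  rw [volume_preimage_eq_lintegral_of_inverse_branches hA
    (leftInverse_booleBranch (one_pow 2)) (leftInverse_booleBranch (by norm_num))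
    (hasDerivAt_booleBranch 1) (hasDerivAt_booleBranch (-1))
    disjoint_range_booleBranch volume_compl_range_booleBranch]
  simp only [abs_booleBranchDeriv_one_add_abs_booleBranchDeriv_neg_one, ENNReal.ofReal_one,
    setLIntegral_one]
end

section
/- If F : ℝ → ℝ is a bounded measurable function such that the limit A(F) := lim_{a→+∞} (1/(2a)) ∫_{-a}^{a} F dm exists, then the limit A(F ∘ T) also exists and A(F ∘ T) = A(F), where T is the Boole map. -/
/-!
On `(0, ∞)` and on `(-∞, 0)` the Boole map `T x = x - 1 / x` is an increasing bijection onto `ℝ`;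
its inverse branches `ψ₊, ψ₋` are the two roots of `x ^ 2 - y x - 1`, so `ψ₊ + ψ₋ = id` and
`ψ₊' + ψ₋' = 1`. Changing variables along both branches turns `∫_{-a}^{a} F ∘ T` into
`∫_{-(1/a)}^{1/a} F ∘ T + ∫_{-c}^{c} F` with `c = a - 1 / a`. The first term is `O(1 / a)` for
bounded `F`, and `c / a → 1`, so the averages of `F ∘ T` and of `F` have the same limit.
-/

open MeasureTheory Filter

lemma intervalIntegrable_of_abs_le {G : ℝ → ℝ} (hG : Measurable G) {C : ℝ} (hGC : ∀ x, |G x| ≤ C)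
    (u v : ℝ) : IntervalIntegrable G volume u v :=
  intervalIntegrable_iff.mpr <| Measure.integrableOn_of_bounded measure_Ioc_lt_top.ne
    hG.aestronglyMeasurable (M := C) (ae_of_all _ hGC)

lemma tendsto_average_integral_neg_inv_inv {G : ℝ → ℝ} {C : ℝ} (hGC : ∀ x, |G x| ≤ C) :
    Tendsto (fun a : ℝ => (1 / (2 * a)) * ∫ x in (-(1 / a))..(1 / a), G x) atTop (nhds 0) := by
  have hC : Tendsto (fun a : ℝ => C * (a⁻¹ * a⁻¹)) atTop (nhds 0) := by
    simpa using
      tendsto_const_nhds.mul ((tendsto_inv_atTop_zero (𝕜 := ℝ)).mul tendsto_inv_atTop_zero)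
  refine squeeze_zero_norm' ?_ hC
  filter_upwards [eventually_gt_atTop 0] with a ha
  have hI : ‖∫ x in (-(1 / a))..(1 / a), G x‖ ≤ C * |1 / a - -(1 / a)| :=
    intervalIntegral.norm_integral_le_of_norm_le_const fun x _ => hGC x
  calc ‖(1 / (2 * a)) * ∫ x in (-(1 / a))..(1 / a), G x‖
      ≤ (1 / (2 * a)) * (C * |1 / a - -(1 / a)|) := by
        rw [norm_mul, Real.norm_of_nonneg (by positivity : (0:ℝ) ≤ 1 / (2 * a))]; gcongr
    _ = C * (a⁻¹ * a⁻¹) := by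
        rw [abs_of_pos (by simp [ha])]; field_simp; ring

lemma tendsto_average_integral_comp {F : ℝ → ℝ} {A : ℝ}
    (hF : Tendsto (fun a : ℝ => (1 / (2 * a)) * ∫ x in (-a)..a, F x) atTop (nhds A))
    {φ : ℝ → ℝ} (hφ : Tendsto φ atTop atTop) (hφa : Tendsto (fun a => φ a / a) atTop (nhds 1)) :
    Tendsto (fun a : ℝ => (1 / (2 * a)) * ∫ x in (-φ a)..(φ a), F x) atTop (nhds A) := by
  refine ((one_mul A) ▸ hφa.mul (hF.comp hφ)).congr' ?_
  filter_upwards [eventually_gt_atTop 0, hφ.eventually_gt_atTop 0] with a ha hφa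
  simp only [Function.comp_apply]
  field_simp

lemma tendsto_sub_inv_div_self : Tendsto (fun a : ℝ => (a - 1 / a) / a) atTop (nhds 1) := by
  have h : Tendsto (fun a : ℝ => 1 - a⁻¹ * a⁻¹) atTop (nhds 1) := by
    simpa using
      tendsto_const_nhds.sub ((tendsto_inv_atTop_zero (𝕜 := ℝ)).mul tendsto_inv_atTop_zero)
  refine h.congr' ?_
  filter_upwards [eventually_gt_atTop 0] with a ha
  field_simp

lemma tendsto_sub_inv_atTop : Tendsto (fun a : ℝ => a - 1 / a) atTop atTop := by
  simpa [sub_eq_add_neg] using tendsto_id.atTop_add (tendsto_inv_atTop_zero (𝕜 := ℝ)).neg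

noncomputable def booleInvPos (y : ℝ) : ℝ := (y + √(y ^ 2 + 4)) / 2

noncomputable def booleInvNeg (y : ℝ) : ℝ := (y - √(y ^ 2 + 4)) / 2

noncomputable def booleSlope (y : ℝ) : ℝ := y / √(y ^ 2 + 4)

lemma sqrt_sq_add_four_pos (y : ℝ) : 0 < √(y ^ 2 + 4) := by positivity

lemma abs_booleSlope_le_one (y : ℝ) : |booleSlope y| ≤ 1 := by
  rw [booleSlope, abs_div, abs_of_pos (sqrt_sq_add_four_pos y), div_le_one (sqrt_sq_add_four_pos y),
    ← Real.sqrt_sq_eq_abs]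
  exact Real.sqrt_le_sqrt (by linarith)

@[fun_prop]
lemma continuous_booleSlope : Continuous booleSlope :=
  continuous_id.div (by fun_prop) fun y => (sqrt_sq_add_four_pos y).ne'

lemma hasDerivAt_sqrt_sq_add_four (y : ℝ) :
    HasDerivAt (fun y : ℝ => √(y ^ 2 + 4)) (booleSlope y) y := by
  refine (((hasDerivAt_pow 2 y).add_const 4).sqrt (by positivity)).congr_deriv ?_
  rw [booleSlope]; field_simp; ring

lemma hasDerivAt_booleInvPos (y : ℝ) : HasDerivAt booleInvPos ((1 + booleSlope y) / 2) y :=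
  ((hasDerivAt_id y).add (hasDerivAt_sqrt_sq_add_four y)).div_const 2

lemma hasDerivAt_booleInvNeg (y : ℝ) : HasDerivAt booleInvNeg ((1 - booleSlope y) / 2) y :=
  ((hasDerivAt_id y).sub (hasDerivAt_sqrt_sq_add_four y)).div_const 2

lemma booleInvPos_mul_booleInvNeg (y : ℝ) : booleInvPos y * booleInvNeg y = -1 := by
  have h := Real.sq_sqrt (by positivity : (0 : ℝ) ≤ y ^ 2 + 4)
  rw [booleInvPos, booleInvNeg]; linear_combination (-1/4 : ℝ) * h

lemma booleInvPos_sub_inv (y : ℝ) : booleInvPos y - 1 / booleInvPos y = y := by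
  have h := booleInvPos_mul_booleInvNeg y
  have hne : booleInvPos y ≠ 0 := left_ne_zero_of_mul (by rw [h]; norm_num)
  rw [show 1 / booleInvPos y = - booleInvNeg y by field_simp; linarith]
  simp only [booleInvPos, booleInvNeg]; ring

lemma booleInvNeg_sub_inv (y : ℝ) : booleInvNeg y - 1 / booleInvNeg y = y := by
  have h := booleInvPos_mul_booleInvNeg y
  have hne : booleInvNeg y ≠ 0 := right_ne_zero_of_mul (by rw [h]; norm_num)
  rw [show 1 / booleInvNeg y = - booleInvPos y by field_simp; linarith]
  simp only [booleInvPos, booleInvNeg]; ring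

lemma sqrt_sub_inv_sq_add_four {a : ℝ} (ha : 0 < a) : √((a - 1 / a) ^ 2 + 4) = a + 1 / a := by
  rw [show (a - 1 / a) ^ 2 + 4 = (a + 1 / a) ^ 2 by field_simp; ring]
  exact Real.sqrt_sq (by positivity)

lemma booleInvPos_sub_inv_self {a : ℝ} (ha : 0 < a) : booleInvPos (a - 1 / a) = a := by
  rw [booleInvPos, sqrt_sub_inv_sq_add_four ha]; ring

lemma booleInvNeg_sub_inv_self {a : ℝ} (ha : 0 < a) : booleInvNeg (a - 1 / a) = -(1 / a) := by
  rw [booleInvNeg, sqrt_sub_inv_sq_add_four ha]; ring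

lemma booleInvPos_neg (y : ℝ) : booleInvPos (-y) = -booleInvNeg y := by
  rw [booleInvPos, booleInvNeg, neg_sq]; ring

lemma booleInvNeg_neg (y : ℝ) : booleInvNeg (-y) = -booleInvPos y := by
  rw [booleInvPos, booleInvNeg, neg_sq]; ring

lemma integral_comp_eq_integral_mul_deriv_of_rightInverse {T ψ ψ' : ℝ → ℝ}
    (hψ : ∀ y, HasDerivAt ψ (ψ' y) y) (hψ' : ∀ y, 0 ≤ ψ' y) (hTψ : ∀ y, T (ψ y) = y)
    (F : ℝ → ℝ) (u v : ℝ) : ∫ x in ψ u..ψ v, F (T x) = ∫ y in u..v, F y * ψ' y := by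
  have h := intervalIntegral.integral_comp_mul_deriv_of_deriv_nonneg (a := u) (b := v)
    (g := fun x => F (T x)) (fun y _ => (hψ y).continuousAt.continuousWithinAt)
    (fun y _ => hψ y) (fun y _ => hψ' y)
  simpa only [Function.comp_apply, hTψ] using h.symm

lemma integral_boole_eq {F : ℝ → ℝ} (hF : ∀ u v, IntervalIntegrable F volume u v)
    (hFT : ∀ u v, IntervalIntegrable (fun x => F (x - 1 / x)) volume u v) {a : ℝ} (ha : 0 < a) :
    ∫ x in (-a)..a, F (x - 1 / x) =
      (∫ x in (-(1 / a))..(1 / a), F (x - 1 / x)) + ∫ y in (-(a - 1 / a))..(a - 1 / a), F y := by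
  have hσ y := abs_le.mp (abs_booleSlope_le_one y)
  have hpos := integral_comp_eq_integral_mul_deriv_of_rightInverse (T := fun x => x - 1 / x)
    hasDerivAt_booleInvPos (fun y => by linarith [(hσ y).1]) booleInvPos_sub_inv F
    (-(a - 1 / a)) (a - 1 / a)
  have hneg := integral_comp_eq_integral_mul_deriv_of_rightInverse (T := fun x => x - 1 / x)
    hasDerivAt_booleInvNeg (fun y => by linarith [(hσ y).2]) booleInvNeg_sub_inv F
    (-(a - 1 / a)) (a - 1 / a)
  rw [booleInvPos_neg, booleInvPos_sub_inv_self ha, booleInvNeg_sub_inv_self ha, neg_neg] at hpos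
  rw [booleInvNeg_neg, booleInvPos_sub_inv_self ha, booleInvNeg_sub_inv_self ha] at hneg
  have hsum : ∫ y in (-(a - 1 / a))..(a - 1 / a), F y =
      (∫ y in (-(a - 1 / a))..(a - 1 / a), F y * ((1 - booleSlope y) / 2)) +
        ∫ y in (-(a - 1 / a))..(a - 1 / a), F y * ((1 + booleSlope y) / 2) := by
    rw [← intervalIntegral.integral_add ((hF _ _).mul_continuousOn (by fun_prop))
      ((hF _ _).mul_continuousOn (by fun_prop))]
    congr 1 with y
    ring
  rw [hsum, ← hpos, ← hneg, add_left_comm,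
    intervalIntegral.integral_add_adjacent_intervals (hFT _ _) (hFT _ _),
    intervalIntegral.integral_add_adjacent_intervals (hFT _ _) (hFT _ _)]

theorem boole_average_invariant (F : ℝ → ℝ) (hFm : Measurable F)
    (C : ℝ) (hFb : ∀ x, |F x| ≤ C) (A : ℝ)
    (hF : Tendsto (fun a : ℝ => (1 / (2 * a)) * ∫ x in (-a)..a, F x) atTop (nhds A)) :
    Tendsto (fun a : ℝ => (1 / (2 * a)) * ∫ x in (-a)..a, F (x - 1 / x)) atTop (nhds A) := by
  have hFTb : ∀ x, |F (x - 1 / x)| ≤ C := fun x => hFb _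
  have hFTm : Measurable fun x : ℝ => F (x - 1 / x) := hFm.comp (by fun_prop)
  have hlim := (tendsto_average_integral_neg_inv_inv hFTb).add
    (tendsto_average_integral_comp hF tendsto_sub_inv_atTop tendsto_sub_inv_div_self)
  rw [zero_add] at hlim
  refine hlim.congr' ?_
  filter_upwards [eventually_gt_atTop 0] with a ha
  rw [integral_boole_eq (intervalIntegrable_of_abs_le hFm hFb)
    (intervalIntegrable_of_abs_le hFTm hFTb) ha, mul_add]
end

section
/- For all x > 4, φ₁'''(x) + φ₁''(x) - (φ₁'(x))² > 0, where φ₁(x) = (-x+√(x²+4))/2. Equivalently, (x⁵ + 8x³ + 4x² + 4x + 16) - √(x²+4)·(x⁴ + 6x² + 8) > 0 for all x > 4. -/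
/-!
With `s = √(x² + 4)` the three derivatives are `φ₁' = (x/s - 1)/2`, `φ₁'' = 2/s³` and
`φ₁''' = -6x/s⁵`, so `φ₁''' + φ₁'' - φ₁'² = (P(x) - s Q(x)) / (2 s⁵)` with
`P = x⁵ + 8x³ + 4x² + 4x + 16` and `Q = x⁴ + 6x² + 8`. Since `P > 0`, the sign of `P - s Q` is that
of `P² - (x² + 4) Q² = 4x (x⁵ (2x - 7) + 8x³ (3x - 7) + 4x (18x - 19) + 32)`, which is positive
as soon as `x ≥ 7/2`.
-/

open Real

section SqrtSqAdd

variable {a : ℝ}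

theorem hasDerivAt_sqrt_sq_add (ha : 0 < a) (y : ℝ) :
    HasDerivAt (fun y : ℝ => √(y ^ 2 + a)) (y / √(y ^ 2 + a)) y := by
  have h := ((hasDerivAt_pow 2 y).add_const a).sqrt (by positivity)
  refine h.congr_deriv ?_
  push_cast
  ring

theorem deriv_half_neg_add_sqrt_sq_add (ha : 0 < a) :
    deriv (fun y : ℝ => (-y + √(y ^ 2 + a)) / 2) = fun y => (-1 + y / √(y ^ 2 + a)) / 2 :=
  funext fun y => (((hasDerivAt_id y).neg.add (hasDerivAt_sqrt_sq_add ha y)).div_const 2).deriv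

theorem deriv_half_neg_one_add_div_sqrt_sq_add (ha : 0 < a) :
    deriv (fun y : ℝ => (-1 + y / √(y ^ 2 + a)) / 2) = fun y => a / (2 * √(y ^ 2 + a) ^ 3) := by
  funext y
  have hs : 0 < √(y ^ 2 + a) := sqrt_pos.mpr (by positivity)
  have hsq : √(y ^ 2 + a) ^ 2 = y ^ 2 + a := sq_sqrt (by positivity)
  refine ((((hasDerivAt_id y).div (hasDerivAt_sqrt_sq_add ha y) hs.ne').const_add
    (-1)).div_const 2).deriv.trans ?_
  simp only [id]
  field_simp
  linear_combination hsq

theorem deriv_div_two_mul_sqrt_sq_add_pow_three (ha : 0 < a) :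
    deriv (fun y : ℝ => a / (2 * √(y ^ 2 + a) ^ 3)) =
      fun y => -3 * a * y / (2 * √(y ^ 2 + a) ^ 5) := by
  funext y
  have hs : 0 < √(y ^ 2 + a) := sqrt_pos.mpr (by positivity)
  refine ((hasDerivAt_const y a).div (((hasDerivAt_sqrt_sq_add ha y).fun_pow 3).const_mul 2)
    (by positivity)).deriv.trans ?_
  field_simp
  ring

end SqrtSqAdd

theorem sqrt_mul_lt_of_mul_sq_lt {c p q : ℝ} (hp : 0 < p) (hq : 0 ≤ q) (h : c * q ^ 2 < p ^ 2) :
    √c * q < p := by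
  rwa [← sqrt_sq hq, ← sqrt_mul' c (sq_nonneg q), sqrt_lt' hp]

theorem sq_add_four_mul_sq_lt_sq {x : ℝ} (hx : 7 / 2 ≤ x) :
    (x ^ 2 + 4) * (x ^ 4 + 6 * x ^ 2 + 8) ^ 2 <
      (x ^ 5 + 8 * x ^ 3 + 4 * x ^ 2 + 4 * x + 16) ^ 2 := by
  have h7 : 0 ≤ 2 * x - 7 := by linarith
  have h3 : 0 < 3 * x - 7 := by linarith
  have h19 : 0 < 18 * x - 19 := by linarith
  have hx0 : 0 < x := by linarith
  have key :
      0 < 4 * x * (x ^ 5 * (2 * x - 7) + 8 * x ^ 3 * (3 * x - 7) + 4 * x * (18 * x - 19) + 32) := by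
    positivity
  linear_combination key

theorem third_add_second_sub_sq_first_eq {s x : ℝ} (hs : s ≠ 0) (hsq : s ^ 2 = x ^ 2 + 4) :
    -3 * 4 * x / (2 * s ^ 5) + 4 / (2 * s ^ 3) - ((-1 + x / s) / 2) ^ 2 =
      ((x ^ 5 + 8 * x ^ 3 + 4 * x ^ 2 + 4 * x + 16) - s * (x ^ 4 + 6 * x ^ 2 + 8)) /
        (2 * s ^ 5) := by
  field_simp
  linear_combination (-s ^ 3 + 2 * x * s ^ 2 - (2 * x ^ 2 + 4) * s + 8 + 2 * x * (x ^ 2 + 4)) * hsq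

theorem folded_boole_B (x : ℝ) (hx : 4 < x) :
    deriv (deriv (deriv (fun y : ℝ => (-y + Real.sqrt (y ^ 2 + 4)) / 2))) x +
      deriv (deriv (fun y : ℝ => (-y + Real.sqrt (y ^ 2 + 4)) / 2)) x -
      (deriv (fun y : ℝ => (-y + Real.sqrt (y ^ 2 + 4)) / 2) x) ^ 2 > 0 ∧
    (x ^ 5 + 8 * x ^ 3 + 4 * x ^ 2 + 4 * x + 16) -
      Real.sqrt (x ^ 2 + 4) * (x ^ 4 + 6 * x ^ 2 + 8) > 0 := by
  have h4 : (0 : ℝ) < 4 := by norm_num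
  have hx0 : 0 < x := by linarith
  have hgap : √(x ^ 2 + 4) * (x ^ 4 + 6 * x ^ 2 + 8) < x ^ 5 + 8 * x ^ 3 + 4 * x ^ 2 + 4 * x + 16 :=
    sqrt_mul_lt_of_mul_sq_lt (by positivity) (by positivity)
      (sq_add_four_mul_sq_lt_sq (by linarith))
  refine ⟨?_, sub_pos.mpr hgap⟩
  rw [deriv_half_neg_add_sqrt_sq_add h4, deriv_half_neg_one_add_div_sqrt_sq_add h4,
    deriv_div_two_mul_sqrt_sq_add_pow_three h4, gt_iff_lt,
    third_add_second_sub_sq_first_eq (sqrt_pos.mpr (by positivity)).ne'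
    (sq_sqrt (by positivity))]
  exact div_pos (sub_pos.mpr hgap) (by positivity)
end
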